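/- Let T be a bounded-below operator on H, so that T^# = (T*T)^{-1}T* is well defined. Then for each n ≥ 0, Tⁿ(Tⁿ)^# is the orthogonal projection onto Tⁿ H, and Tⁿ(Tⁿ)^# − T^(n+1)(T^(n+1))^# is the orthogonal projection onto Tⁿ(ker T*), provided T is a near-isometry. -/

import Mathlib

open ContinuousLinearMap

/-- Near-isometry (orthogonality form): bounded-below contraction with
`Tᵐ(ker T*) ⊥ Tᵐ⁺¹ H` for all `m ≥ 0`. -/
def IsNearIsometry {K : Type*} [NormedAddCommGroup K] [InnerProductSpace ℂ K]
    [CompleteSpace K] (T : K →L[ℂ] K) : Prop :=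
  (∃ δ > (0 : ℝ), ∀ x : K, δ * ‖x‖ ≤ ‖T x‖ ∧ ‖T x‖ ≤ ‖x‖) ∧
  ∀ n : ℕ, ∀ x ∈ LinearMap.ker ((adjoint T : K →L[ℂ] K) : K →ₗ[ℂ] K), ∀ y : K,
    (inner ℂ ((T ^ n) x) ((T ^ (n + 1)) y) : ℂ) = 0

/-- The left inverse `S^# = (S*S)⁻¹ S*` of a bounded-below operator `S`. -/
noncomputable def sharp {K : Type*} [NormedAddCommGroup K] [InnerProductSpace ℂ K]
    [CompleteSpace K] (S : K →L[ℂ] K) : K →L[ℂ] K :=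
  Ring.inverse (adjoint S * S) * adjoint S

/-- `P` is the orthogonal projection onto the subspace `M`. -/
def IsOrthoProjOnto {K : Type*} [NormedAddCommGroup K] [InnerProductSpace ℂ K]
    (P : K →L[ℂ] K) (M : Submodule ℂ K) : Prop :=
  ∀ x : K, P x ∈ M ∧ ∀ y ∈ M, (inner ℂ (x - P x) y : ℂ) = 0

/-! Since `T` is bounded below, `T*T` is coercive and hence invertible, so for `S = Tⁿ` the
residual `x - S S^# x` is killed by `S*`, i.e. is orthogonal to `S H`. For the difference,
`H = ker T* + T H` gives `Tⁿ H = Tⁿ(ker T*) + Tⁿ⁺¹ H`, a sum which the near-isometry condition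
makes orthogonal; subtracting the projection onto the second summand from the projection onto
the sum leaves the projection onto the first. -/

open scoped InnerProduct

theorem ContinuousLinearMap.mul_norm_le_norm_pow_apply {𝕜 E : Type*} [NormedField 𝕜]
    [SeminormedAddCommGroup E] [NormedSpace 𝕜 E] {T : E →L[𝕜] E} {c : ℝ} (hc : 0 ≤ c)
    (h : ∀ x, c * ‖x‖ ≤ ‖T x‖) (n : ℕ) (x : E) : c ^ n * ‖x‖ ≤ ‖(T ^ n) x‖ := by
  induction n with
  | zero => simp
  | succ n ih =>
    calc c ^ (n + 1) * ‖x‖ = c * (c ^ n * ‖x‖) := by ring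
      _ ≤ c * ‖(T ^ n) x‖ := by gcongr
      _ ≤ ‖(T ^ (n + 1)) x‖ := by rw [pow_succ', mul_apply_eq_comp]; exact h _

theorem ContinuousLinearMap.isUnit_adjoint_mul_self {𝕜 E : Type*} [RCLike 𝕜]
    [NormedAddCommGroup E] [InnerProductSpace 𝕜 E] [CompleteSpace E] {S : E →L[𝕜] E} {c : ℝ}
    (hc : 0 < c) (h : ∀ x, c * ‖x‖ ≤ ‖S x‖) : IsUnit (S† * S) := by
  refine isUnit_of_forall_le_norm_inner_map _ (c := (c ^ 2).toNNReal)
    (Real.toNNReal_pos.mpr (by positivity)) fun x => ?_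
  rw [mul_apply_eq_comp, adjoint_inner_left, inner_self_eq_norm_sq_to_K, norm_pow,
    RCLike.norm_ofReal, abs_norm, Real.coe_toNNReal _ (by positivity), mul_comm, ← mul_pow]
  gcongr
  exact h x

section Sharp

variable {H : Type*} [NormedAddCommGroup H] [InnerProductSpace ℂ H] [CompleteSpace H]

theorem adjoint_mul_mul_sharp {S : H →L[ℂ] H} (hS : IsUnit (S† * S)) :
    S† * (S * sharp S) = S† := by
  rw [sharp, ← mul_assoc, ← mul_assoc, Ring.mul_inverse_cancel _ hS, one_mul]

theorem adjoint_apply_sub_mul_sharp_apply {S : H →L[ℂ] H} (hS : IsUnit (S† * S)) (x : H) :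
    (S†) (x - (S * sharp S) x) = 0 := by
  rw [map_sub, ← mul_apply_eq_comp, adjoint_mul_mul_sharp hS, sub_self]

theorem isOrthoProjOnto_mul_sharp {S : H →L[ℂ] H} (hS : IsUnit (S† * S)) :
    IsOrthoProjOnto (S * sharp S) (LinearMap.range (S : H →ₗ[ℂ] H)) := by
  refine fun x => ⟨⟨sharp S x, rfl⟩, ?_⟩
  rintro _ ⟨z, rfl⟩
  rw [coe_coe, ← adjoint_inner_left, adjoint_apply_sub_mul_sharp_apply hS, inner_zero_left]

theorem ker_adjoint_sup_range {S : H →L[ℂ] H} (hS : IsUnit (S† * S)) :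
    LinearMap.ker (S† : H →ₗ[ℂ] H) ⊔ LinearMap.range (S : H →ₗ[ℂ] H) = ⊤ := by
  refine eq_top_iff.mpr fun x _ => Submodule.mem_sup.mpr
    ⟨x - (S * sharp S) x, adjoint_apply_sub_mul_sharp_apply hS x, _, ⟨sharp S x, rfl⟩, ?_⟩
  simp

end Sharp

namespace IsOrthoProjOnto

variable {H : Type*} [NormedAddCommGroup H] [InnerProductSpace ℂ H]
  {P Q : H →L[ℂ] H} {M N : Submodule ℂ H}

theorem apply_eq (hP : IsOrthoProjOnto P M) {x y : H} (hy : y ∈ M)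
    (h : ∀ z ∈ M, inner ℂ (x - y) z = 0) : P x = y := by
  have hmem : P x - y ∈ M := M.sub_mem (hP x).1 hy
  have horth : ∀ z ∈ M, inner ℂ (P x - y) z = 0 := fun z hz => by
    rw [show P x - y = (x - y) - (x - P x) by abel, inner_sub_left, h z hz, (hP x).2 z hz,
      sub_zero]
  exact sub_eq_zero.mp (inner_self_eq_zero.mp (horth _ hmem))

theorem sub_of_sup (hP : IsOrthoProjOnto P (M ⊔ N)) (hQ : IsOrthoProjOnto Q N) (hMN : M ⟂ N) :
    IsOrthoProjOnto (P - Q) M := by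
  intro x
  obtain ⟨m, hm, n, hn, hPx⟩ := Submodule.mem_sup.mp (hP x).1
  have hQx : Q x = n := hQ.apply_eq hn fun z hz => by
    rw [show x - n = (x - P x) + m by rw [← hPx]; abel, inner_add_left,
      (hP x).2 z (Submodule.mem_sup_right hz), Submodule.isOrtho_iff_inner_eq.mp hMN m hm z hz,
      add_zero]
  refine ⟨by rw [sub_apply, hQx, ← hPx, add_sub_cancel_right]; exact hm, fun y hy => ?_⟩
  rw [sub_apply, sub_sub_eq_add_sub, add_sub_right_comm, inner_add_left,
    (hP x).2 y (Submodule.mem_sup_left hy), hQx,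
    Submodule.isOrtho_iff_inner_eq.mp hMN.symm n hn y hy, add_zero]

end IsOrthoProjOnto

section NearIsometry

variable {H : Type*} [NormedAddCommGroup H] [InnerProductSpace ℂ H] [CompleteSpace H]

theorem range_pow_eq_map_ker_adjoint_sup_range_pow_succ {T : H →L[ℂ] H} (hT : IsUnit (T† * T))
    (n : ℕ) : LinearMap.range ((T ^ n : H →L[ℂ] H) : H →ₗ[ℂ] H) =
      (LinearMap.ker (T† : H →ₗ[ℂ] H)).map ((T ^ n : H →L[ℂ] H) : H →ₗ[ℂ] H) ⊔
        LinearMap.range ((T ^ (n + 1) : H →L[ℂ] H) : H →ₗ[ℂ] H) := by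
  rw [LinearMap.range_eq_map, ← ker_adjoint_sup_range hT, Submodule.map_sup, pow_succ,
    toLinearMap_mul, Module.End.mul_eq_comp, LinearMap.range_comp]

theorem IsNearIsometry.isOrtho {T : H →L[ℂ] H} (hT : IsNearIsometry T) (n : ℕ) :
    (LinearMap.ker (T† : H →ₗ[ℂ] H)).map ((T ^ n : H →L[ℂ] H) : H →ₗ[ℂ] H) ⟂
      LinearMap.range ((T ^ (n + 1) : H →L[ℂ] H) : H →ₗ[ℂ] H) := by
  rw [Submodule.isOrtho_iff_inner_eq]
  rintro _ ⟨x, hx, rfl⟩ _ ⟨y, rfl⟩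
  exact hT.2 n x hx y

end NearIsometry

/-- For a bounded-below operator `T`, `Tⁿ(Tⁿ)^#` is the orthogonal projection
onto `Tⁿ H`; and if moreover `T` is a near-isometry, then
`Tⁿ(Tⁿ)^# − Tⁿ⁺¹(Tⁿ⁺¹)^#` is the orthogonal projection onto `Tⁿ(ker T*)`. -/
theorem stmt13 {H : Type*} [NormedAddCommGroup H] [InnerProductSpace ℂ H] [CompleteSpace H]
    (T : H →L[ℂ] H) (δ : ℝ) (hδ : 0 < δ) (hlow : ∀ x : H, δ * ‖x‖ ≤ ‖T x‖) (n : ℕ) :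
    IsOrthoProjOnto ((T ^ n) * sharp (T ^ n)) (LinearMap.range ((T ^ n : H →L[ℂ] H) : H →ₗ[ℂ] H)) ∧
    (IsNearIsometry T →
      IsOrthoProjOnto ((T ^ n) * sharp (T ^ n) - (T ^ (n + 1)) * sharp (T ^ (n + 1)))
        ((LinearMap.ker ((adjoint T : H →L[ℂ] H) : H →ₗ[ℂ] H)).map ((T ^ n : H →L[ℂ] H) : H →ₗ[ℂ] H))) := by
  have hpow (m : ℕ) : IsUnit ((T ^ m)† * T ^ m) :=
    isUnit_adjoint_mul_self (pow_pos hδ m) (mul_norm_le_norm_pow_apply hδ.le hlow m)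
  have hPn := isOrthoProjOnto_mul_sharp (hpow n)
  refine ⟨hPn, fun hT => ?_⟩
  rw [range_pow_eq_map_ker_adjoint_sup_range_pow_succ (isUnit_adjoint_mul_self hδ hlow)] at hPn
  exact hPn.sub_of_sup (isOrthoProjOnto_mul_sharp (hpow (n + 1))) (hT.isOrtho n)
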